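/- Doubling-of-variables convergence (cf. Lemma 3.1 of Crandall–Ishii–Lions, used in Step 2 of Proposition 5.1): let Γ : K × K → ℝ be upper semicontinuous and bounded above on a compact metric space K, and for n ≥ 1 let (x_n, y_n) maximize Θ_n(x,y) := Γ(x,y) − n d(x,y)². Then, along a subsequence, (x_n, y_n) → (x̂, x̂) for some x̂ ∈ K, n d(x_n,y_n)² → 0, and Θ_n(x_n,y_n) → Γ(x̂,x̂) = max_{x∈K} Γ(x,x). -/
import Mathlib


open Filter Topology

/-- doubling of variables, cf. Lemma 3.1 of Crandall–Ishii–Lions: let `Γ`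
be upper semicontinuous on `K × K` with `K` compact metric, and let `(x_n, y_n)` maximize
`Θ_n(x,y) := Γ(x,y) − n d(x,y)²`. Then along a subsequence `(x_n,y_n) → (xhat,xhat)`,
`n d(x_n,y_n)² → 0`, and `Θ_n(x_n,y_n) → Γ(xhat,xhat) = max_x Γ(x,x)`. -/
theorem doubling_of_variables
    {K : Type*} [MetricSpace K] [CompactSpace K] [Nonempty K]
    (Γ : K × K → ℝ) (hΓ : UpperSemicontinuous Γ) (hΓb : BddAbove (Set.range Γ))
    (x y : ℕ → K)
    (hmax : ∀ (n : ℕ) (p : K × K),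
        Γ p - (n : ℝ) * dist p.1 p.2 ^ 2
          ≤ Γ (x n, y n) - (n : ℝ) * dist (x n) (y n) ^ 2) :
    ∃ nk : ℕ → ℕ, StrictMono nk ∧ ∃ xhat : K,
      Tendsto (fun k => ((x (nk k), y (nk k)) : K × K)) atTop (𝓝 (xhat, xhat))
      ∧ Tendsto (fun k => (nk k : ℝ) * dist (x (nk k)) (y (nk k)) ^ 2) atTop (𝓝 0)
      ∧ Tendsto (fun k =>
            Γ (x (nk k), y (nk k)) - (nk k : ℝ) * dist (x (nk k)) (y (nk k)) ^ 2)
          atTop (𝓝 (Γ (xhat, xhat)))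
      ∧ Γ (xhat, xhat) = ⨆ t : K, Γ (t, t) := by
  classical
  set z : ℕ → K × K := fun n => (x n, y n) with hz
  obtain ⟨p, -, nk, hmono, htend⟩ :=
    isCompact_univ.tendsto_subseq (fun n => Set.mem_univ (z n))
  set M : ℝ := ⨆ t : K, Γ (t, t) with hM
  obtain ⟨C, hC⟩ := hΓb
  have hCmem : ∀ q, Γ q ≤ C := fun q => hC (Set.mem_range_self q)
  have hbdd : BddAbove (Set.range fun t : K => Γ (t, t)) :=
    ⟨C, by rintro _ ⟨t, rfl⟩; exact hCmem (t, t)⟩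
  have hMle : ∀ n, M ≤ Γ (x n, y n) - (n : ℝ) * dist (x n) (y n) ^ 2 := fun n =>
    ciSup_le fun t => by simpa using hmax n (t, t)
  have hΓself : ∀ t : K, Γ (t, t) ≤ M := fun t => le_ciSup hbdd t
  have hbnonneg : ∀ n : ℕ, 0 ≤ (n : ℝ) * dist (x n) (y n) ^ 2 := fun n =>
    mul_nonneg (Nat.cast_nonneg n) (sq_nonneg _)
  have hCM : 0 ≤ C - M := by
    have h1 := hMle 0
    have h2 := hCmem (x 0, y 0)
    simp only [Nat.cast_zero, zero_mul, sub_zero] at h1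
    linarith
  have hdistbound : ∀ n : ℕ, (n : ℝ) * dist (x n) (y n) ^ 2 ≤ C - M := fun n => by
    have h1 := hMle n
    have h2 := hCmem (x n, y n)
    linarith
  -- dist squared tends to 0 along subsequence
  have hd2 : Tendsto (fun k => dist (x (nk k)) (y (nk k)) ^ 2) atTop (𝓝 0) := by
    have h0 : Tendsto (fun k : ℕ => (C - M) / (k : ℝ)) atTop (𝓝 0) :=
      tendsto_const_div_atTop_nhds_zero_nat _
    refine tendsto_of_tendsto_of_tendsto_of_le_of_le' tendsto_const_nhds h0 ?_ ?_
    · exact Eventually.of_forall fun k => sq_nonneg _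
    · filter_upwards [eventually_ge_atTop 1] with k hk
      have hkn : (1 : ℕ) ≤ nk k := hk.trans (hmono.id_le k)
      have hnkpos : (0 : ℝ) < (nk k : ℝ) := by exact_mod_cast hkn
      have hkpos : (0 : ℝ) < (k : ℝ) := by exact_mod_cast hk
      have h1 : dist (x (nk k)) (y (nk k)) ^ 2 ≤ (C - M) / (nk k : ℝ) := by
        rw [le_div_iff₀ hnkpos, mul_comm]
        exact hdistbound (nk k)
      refine h1.trans ?_
      gcongr
      exact_mod_cast hmono.id_le k
  -- the limit is diagonal
  have hdist : Tendsto (fun k => dist (x (nk k)) (y (nk k))) atTop (𝓝 (dist p.1 p.2)) :=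
    (continuous_dist.tendsto p).comp htend
  have hd2' : Tendsto (fun k => dist (x (nk k)) (y (nk k)) ^ 2) atTop (𝓝 (dist p.1 p.2 ^ 2)) :=
    hdist.pow 2
  have hdeq : dist p.1 p.2 ^ 2 = 0 := tendsto_nhds_unique hd2' hd2
  have hpeq : p.2 = p.1 := by
    have : dist p.1 p.2 = 0 := by
      have := sq_eq_zero_iff.mp hdeq
      exact this
    exact (eq_of_dist_eq_zero this).symm
  set xhat : K := p.1 with hxhat
  have hp : p = (xhat, xhat) := by
    rw [hxhat]; exact Prod.ext rfl hpeq
  rw [hp] at htend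
  -- upper semicontinuity bound
  have husc : ∀ ε : ℝ, 0 < ε → ∀ᶠ k in atTop, Γ (x (nk k), y (nk k)) < Γ (xhat, xhat) + ε := by
    intro ε hε
    have := hΓ (xhat, xhat) (Γ (xhat, xhat) + ε) (by linarith)
    exact htend.eventually this
  have hΓpM : Γ (xhat, xhat) ≤ M := hΓself xhat
  -- M ≤ Γ (xhat,xhat)
  have hMΓp : M ≤ Γ (xhat, xhat) := by
    refine le_of_forall_pos_le_add fun ε hε => ?_
    obtain ⟨k, hk⟩ := (husc ε hε).exists
    have h1 := hMle (nk k)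
    have h2 := hbnonneg (nk k)
    linarith
  have hMeq : Γ (xhat, xhat) = M := le_antisymm hΓpM hMΓp
  -- key eventual bounds
  have hkey : ∀ ε : ℝ, 0 < ε → ∀ᶠ k in atTop,
      (nk k : ℝ) * dist (x (nk k)) (y (nk k)) ^ 2 < ε ∧
      |Γ (x (nk k), y (nk k)) - (nk k : ℝ) * dist (x (nk k)) (y (nk k)) ^ 2 - Γ (xhat, xhat)| < ε := by
    intro ε hε
    filter_upwards [husc ε hε] with k hk
    have h1 := hMle (nk k)
    have h2 := hbnonneg (nk k)
    constructor
    · linarith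
    · rw [abs_lt]; constructor <;> linarith
  refine ⟨nk, hmono, xhat, htend, ?_, ?_, hMeq⟩
  · rw [Metric.tendsto_nhds]
    intro ε hε
    filter_upwards [hkey ε hε] with k hk
    rw [Real.dist_eq, sub_zero, abs_of_nonneg (hbnonneg (nk k))]
    exact hk.1
  · rw [Metric.tendsto_nhds]
    intro ε hε
    filter_upwards [hkey ε hε] with k hk
    rw [Real.dist_eq]
    exact hk.2
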